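/- arXiv:1806.04457 — 2 statements merged into one kernel-verified Lean document; each statement's English description precedes it below -/
import Mathlib

section
/- Let G = (V, E) be a digraph, (X_1, ..., X_r) a directed path-decomposition of G, and A, B ⊆ V disjoint sets with all arcs between A and B in both directions present in E. If there is some i with A ⊆ X_i, then there exist indices i_1 ≤ i_2 such that: (1) A ⊆ X_i for all i_1 ≤ i ≤ i_2; (2) B ⊆ X_{i_1} ∪ ... ∪ X_{i_2}; and (3) the sequence (X_{i_1} ∩ (A ∪ B), ..., X_{i_2} ∩ (A ∪ B)) is a directed path-decomposition of the subdigraph of G induced by A ∪ B. -/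
noncomputable section
attribute [local instance] Classical.propDecidable

/-- A digraph: a loopless binary relation on a vertex type. -/
structure Digraph' (V : Type) where
  Adj : V → V → Prop
  loopless : ∀ v, ¬ Adj v v

namespace Digraph'

/-- The subdigraph of `G` induced by a vertex set `S`. -/
def induce {V : Type} (G : Digraph' V) (S : Set V) : Digraph' S where
  Adj a b := G.Adj a.1 b.1
  loopless a := G.loopless a.1

end Digraph'

/-- `bags : Fin r → Set V` is a directed path-decomposition of `G`:
(dpw-1) the bags cover `V`; (dpw-2) for every arc `(u,v)` there are `i ≤ j` with
`u ∈ X_i`, `v ∈ X_j`; (dpw-3) every vertex occurs in a consecutive interval of bags. -/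
def IsDPD {V : Type} (G : Digraph' V) (r : ℕ) (bags : Fin r → Set V) : Prop :=
  (∀ v, ∃ i, v ∈ bags i) ∧
  (∀ u v, G.Adj u v → ∃ i j : Fin r, i ≤ j ∧ u ∈ bags i ∧ v ∈ bags j) ∧
  (∀ (v : V) (i j k : Fin r), i ≤ j → j ≤ k → v ∈ bags i → v ∈ bags k → v ∈ bags j)

/-- The width of a sequence of bags: maximum bag size minus one. -/
def bagsWidth {V : Type} {r : ℕ} (bags : Fin r → Set V) : ℕ :=
  (Finset.univ.sup fun i => (bags i).ncard) - 1

/-- The directed path-width of a digraph. -/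
def dpw {V : Type} [Fintype V] (G : Digraph' V) : ℕ :=
  sInf { w | ∃ (r : ℕ) (bags : Fin r → Set V), IsDPD G r bags ∧ bagsWidth bags = w }

/-- Disjoint union `G ⊕ H` of two vertex-disjoint digraphs. -/
def dDisjUnion {V W : Type} (G : Digraph' V) (H : Digraph' W) : Digraph' (V ⊕ W) where
  Adj x y :=
    match x, y with
    | Sum.inl a, Sum.inl b => G.Adj a b
    | Sum.inr a, Sum.inr b => H.Adj a b
    | _, _ => False
  loopless v := by
    cases v with
    | inl a => exact G.loopless a
    | inr a => exact H.loopless a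

/-- Order composition `G ⊘ H`: disjoint union plus all arcs from `G` to `H`. -/
def dOrder {V W : Type} (G : Digraph' V) (H : Digraph' W) : Digraph' (V ⊕ W) where
  Adj x y :=
    match x, y with
    | Sum.inl a, Sum.inl b => G.Adj a b
    | Sum.inr a, Sum.inr b => H.Adj a b
    | Sum.inl _, Sum.inr _ => True
    | Sum.inr _, Sum.inl _ => False
  loopless v := by
    cases v with
    | inl a => exact G.loopless a
    | inr a => exact H.loopless a

/-- Series composition `G ⊗ H`: disjoint union plus all arcs in both directions
between `G` and `H`. -/
def dSeries {V W : Type} (G : Digraph' V) (H : Digraph' W) : Digraph' (V ⊕ W) where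
  Adj x y :=
    match x, y with
    | Sum.inl a, Sum.inl b => G.Adj a b
    | Sum.inr a, Sum.inr b => H.Adj a b
    | Sum.inl _, Sum.inr _ => True
    | Sum.inr _, Sum.inl _ => True
  loopless v := by
    cases v with
    | inl a => exact G.loopless a
    | inr a => exact H.loopless a

/-- A directed union `G ⊖ H`: disjoint union plus an arbitrary set `F` of arcs
directed from vertices of `G` to vertices of `H`. -/
def dDirUnion {V W : Type} (G : Digraph' V) (H : Digraph' W) (F : V → W → Prop) :
    Digraph' (V ⊕ W) where
  Adj x y :=
    match x, y with
    | Sum.inl a, Sum.inl b => G.Adj a b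
    | Sum.inr a, Sum.inr b => H.Adj a b
    | Sum.inl a, Sum.inr b => F a b
    | Sum.inr _, Sum.inl _ => False
  loopless v := by
    cases v with
    | inl a => exact G.loopless a
    | inr a => exact H.loopless a

/-- The underlying undirected graph of a digraph. -/
def und {V : Type} (G : Digraph' V) : SimpleGraph V where
  Adj u v := G.Adj u v ∨ G.Adj v u
  symm := ⟨fun u v h => h.symm⟩
  loopless := ⟨fun v h => h.elim (G.loopless v) (G.loopless v)⟩

/-- `bags` is an (undirected) path-decomposition of the simple graph `G`. -/
def IsUPD {V : Type} (G : SimpleGraph V) (r : ℕ) (bags : Fin r → Set V) : Prop :=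
  (∀ v, ∃ i, v ∈ bags i) ∧
  (∀ u v, G.Adj u v → ∃ i : Fin r, u ∈ bags i ∧ v ∈ bags i) ∧
  (∀ (v : V) (i j k : Fin r), i ≤ j → j ≤ k → v ∈ bags i → v ∈ bags k → v ∈ bags j)

/-- The (undirected) path-width of a simple graph. -/
def upw {V : Type} [Fintype V] (G : SimpleGraph V) : ℕ :=
  sInf { w | ∃ (r : ℕ) (bags : Fin r → Set V), IsUPD G r bags ∧ bagsWidth bags = w }

/-- `S` is `Z`-normal in `G`: every directed walk in `G - Z` with first and last
vertex in `S` uses only vertices of `S` (equivalently of `Z ∪ S`). -/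
def ZNormal {V : Type} (G : Digraph' V) (Z S : Set V) : Prop :=
  ∀ (l : List V) (hl : l ≠ []), l.Chain' G.Adj → (∀ v ∈ l, v ∉ Z) →
    l.head hl ∈ S → l.getLast hl ∈ S → ∀ v ∈ l, v ∈ S

/-- A directed (arboreal) tree-decomposition of `G`.
The out-tree has vertex set `Fin t`, root `root`, and parent function `par`
(with `par root = root`); its arcs are the pairs `(par s, s)` for `s ≠ root`.
`W` partitions `V` into nonempty sets, `X s` is the set attached to the arc
`(par s, s)`, and for each arc the union of the `W r` over all descendants `r`
of `s` is `X s`-normal. -/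
structure DTD {V : Type} (G : Digraph' V) where
  t : ℕ
  root : Fin t
  par : Fin t → Fin t
  par_root : par root = root
  reach : ∀ s : Fin t, ∃ n : ℕ, par^[n] s = root
  W : Fin t → Set V
  X : Fin t → Set V
  W_nonempty : ∀ s, (W s).Nonempty
  W_disjoint : ∀ s s', s ≠ s' → Disjoint (W s) (W s')
  W_cover : ∀ v : V, ∃ s, v ∈ W s
  normal : ∀ s : Fin t, s ≠ root →
    ZNormal G (X s) (⋃ r ∈ {r : Fin t | ∃ n : ℕ, par^[n] r = s}, W r)

namespace DTD

variable {V : Type} {G : Digraph' V}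

/-- The set `W_s ∪ ⋃_{e ∼ s} X_e` at a tree vertex `s`. -/
def bagAt (D : DTD G) (s : Fin D.t) : Set V :=
  D.W s ∪ ⋃ s' ∈ {s' : Fin D.t | s' ≠ D.root ∧ (s' = s ∨ D.par s' = s)}, D.X s'

/-- The width of a directed tree-decomposition. -/
def width (D : DTD G) : ℕ :=
  (Finset.univ.sup fun s => (D.bagAt s).ncard) - 1

end DTD

/-- The directed tree-width of a digraph. -/
def dtw {V : Type} [Fintype V] (G : Digraph' V) : ℕ :=
  sInf { w | ∃ D : DTD G, D.width = w }

/-- Reachability in a digraph. -/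
def Reach {V : Type} (G : Digraph' V) : V → V → Prop :=
  Relation.ReflTransGen G.Adj

/-- The strongly connected component of a vertex `v`. -/
def sccOf {V : Type} (G : Digraph' V) (v : V) : Set V :=
  {u | Reach G v u ∧ Reach G u v}

/-- `S` is a strongly connected component of `G`. -/
def IsSCC {V : Type} (G : Digraph' V) (S : Set V) : Prop :=
  ∃ v, S = sccOf G v

/-- Directed co-graphs: built from single-vertex digraphs by disjoint union,
series composition and order composition. -/
inductive DiCograph : {V : Type} → Digraph' V → Prop
  | single {V : Type} (G : Digraph' V) (h1 : Nonempty V) (h2 : Subsingleton V) :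
      DiCograph G
  | disjUnion {V W : Type} {G : Digraph' V} {H : Digraph' W} :
      DiCograph G → DiCograph H → DiCograph (dDisjUnion G H)
  | series {V W : Type} {G : Digraph' V} {H : Digraph' W} :
      DiCograph G → DiCograph H → DiCograph (dSeries G H)
  | order {V W : Type} {G : Digraph' V} {H : Digraph' W} :
      DiCograph G → DiCograph H → DiCograph (dOrder G H)

/-! The window `[i₁, i₂]` is spanned by the first and the last bag containing all of `A`. A vertex
`b ∈ B` sends an arc to every `a ∈ A`, so if the first bag of `b` came after `i₂`, convexity would
put all of `A` into it; hence `b` first occurs no later than `i₂`, and symmetrically it last occurs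
no earlier than `i₁`. So every vertex of `A ∪ B` meets the window, and any window met by every
vertex of a set `S` restricts to a directed path-decomposition of `G[S]`: an arc `u → v` witnessed
by bags `a ≤ b` is witnessed inside the window by the clamped indices, which stay ordered and, by
convexity, still contain `u` and `v`. -/

theorem val_add_lt_of_window {r : ℕ} (p q : Fin r) (j : Fin ((q : ℕ) - p + 1)) :
    (p : ℕ) + j < r := by
  have := j.isLt; have := p.isLt; have := q.isLt; omega

def windowIdx {r : ℕ} (p q : Fin r) (j : Fin ((q : ℕ) - p + 1)) : Fin r :=
  ⟨p + j, val_add_lt_of_window p q j⟩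

theorem windowIdx_le_windowIdx {r : ℕ} {p q : Fin r} {j j' : Fin ((q : ℕ) - p + 1)} :
    windowIdx p q j ≤ windowIdx p q j' ↔ j ≤ j' := by
  show (p : ℕ) + j ≤ p + j' ↔ _
  rw [Fin.le_iff_val_le_val]
  omega

theorem exists_windowIdx_eq {r : ℕ} {p q k : Fin r} (hpk : p ≤ k) (hkq : k ≤ q) :
    ∃ j, windowIdx p q j = k := by
  rw [Fin.le_iff_val_le_val] at hpk hkq
  exact ⟨⟨k - p, by omega⟩, Fin.ext (by simp [windowIdx]; omega)⟩

namespace IsDPD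

variable {V : Type} {G : Digraph' V} {r : ℕ} {bags : Fin r → Set V}

theorem exists_first_mem (hD : IsDPD G r bags) (v : V) :
    ∃ l, v ∈ bags l ∧ ∀ j, v ∈ bags j → l ≤ j :=
  {j | v ∈ bags j}.exists_min_image id (Set.toFinite _) (hD.1 v)

theorem exists_last_mem (hD : IsDPD G r bags) (v : V) :
    ∃ m, v ∈ bags m ∧ ∀ j, v ∈ bags j → j ≤ m :=
  {j | v ∈ bags j}.exists_max_image id (Set.toFinite _) (hD.1 v)

theorem subset_first_of_forall_adj (hD : IsDPD G r bags) {A : Set V} {b : V} {k l : Fin r}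
    (hfirst : ∀ j, b ∈ bags j → l ≤ j) (hout : ∀ a ∈ A, G.Adj b a)
    (hAk : A ⊆ bags k) (hkl : k ≤ l) : A ⊆ bags l := by
  intro a ha
  obtain ⟨p, q, hpq, hbp, haq⟩ := hD.2.1 b a (hout a ha)
  exact hD.2.2 a k l q hkl ((hfirst p hbp).trans hpq) (hAk ha) haq

theorem subset_last_of_forall_adj (hD : IsDPD G r bags) {A : Set V} {b : V} {k m : Fin r}
    (hlast : ∀ j, b ∈ bags j → j ≤ m) (hin : ∀ a ∈ A, G.Adj a b)
    (hAk : A ⊆ bags k) (hmk : m ≤ k) : A ⊆ bags m := by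
  intro a ha
  obtain ⟨p, q, hpq, hap, hbq⟩ := hD.2.1 a b (hin a ha)
  exact hD.2.2 a p m k (hpq.trans (hlast q hbq)) hmk hap (hAk ha)

theorem exists_mem_between_of_forall_adj (hD : IsDPD G r bags) {A : Set V} {b : V} {i₁ i₂ : Fin r}
    (hA₁ : A ⊆ bags i₁) (hmin : ∀ j, A ⊆ bags j → i₁ ≤ j)
    (hA₂ : A ⊆ bags i₂) (hmax : ∀ j, A ⊆ bags j → j ≤ i₂)
    (hout : ∀ a ∈ A, G.Adj b a) (hin : ∀ a ∈ A, G.Adj a b) :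
    ∃ k, i₁ ≤ k ∧ k ≤ i₂ ∧ b ∈ bags k := by
  obtain ⟨l, hbl, hfirst⟩ := hD.exists_first_mem b
  obtain ⟨m, hbm, hlast⟩ := hD.exists_last_mem b
  have hl : l ≤ i₂ := by
    by_contra! h
    exact h.not_ge (hmax l (hD.subset_first_of_forall_adj hfirst hout hA₂ h.le))
  have hm : i₁ ≤ m := by
    by_contra! h
    exact h.not_ge (hmin m (hD.subset_last_of_forall_adj hlast hin hA₁ h.le))
  exact ⟨max l i₁, le_max_right _ _, max_le hl (hmin i₂ hA₂),
    hD.2.2 b l _ m (le_max_left _ _) (max_le (hfirst m hbm) hm) hbl hbm⟩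

theorem mem_clamp (hD : IsDPD G r bags) {v : V} {a k p q : Fin r}
    (ha : v ∈ bags a) (hk : v ∈ bags k) (hpk : p ≤ k) (hkq : k ≤ q) :
    v ∈ bags (max p (min a q)) := by
  rcases le_total a p with hap | hpa
  · rw [max_eq_left ((min_le_left _ _).trans hap)]
    exact hD.2.2 v a p k hap hpk ha hk
  rcases le_total a q with haq | hqa
  · rwa [min_eq_left haq, max_eq_right hpa]
  · rw [min_eq_right hqa, max_eq_right (hpk.trans hkq)]
    exact hD.2.2 v k q a hkq hqa hk ha

theorem induce_window (hD : IsDPD G r bags) {S : Set V} {p q : Fin r}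
    (hS : ∀ v ∈ S, ∃ k, p ≤ k ∧ k ≤ q ∧ v ∈ bags k) :
    IsDPD (G.induce S) ((q : ℕ) - p + 1) (fun j => {x : S | (x : V) ∈ bags (windowIdx p q j)}) := by
  have clamp_window : ∀ {v}, v ∈ S → ∀ {a}, v ∈ bags a →
      ∃ j, windowIdx p q j = max p (min a q) ∧ v ∈ bags (windowIdx p q j) := by
    intro v hv a ha
    obtain ⟨k, hpk, hkq, hk⟩ := hS v hv
    obtain ⟨j, hj⟩ := exists_windowIdx_eq (q := q) (le_max_left p (min a q))
      (max_le (hpk.trans hkq) (min_le_right _ _))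
    exact ⟨j, hj, hj ▸ hD.mem_clamp ha hk hpk hkq⟩
  refine ⟨fun ⟨v, hv⟩ => ?_, fun ⟨u, hu⟩ ⟨v, hv⟩ huv => ?_, fun x j j' j'' h h' hx hx'' => ?_⟩
  · obtain ⟨k, hpk, hkq, hk⟩ := hS v hv
    obtain ⟨j, rfl⟩ := exists_windowIdx_eq hpk hkq
    exact ⟨j, hk⟩
  · obtain ⟨a, b, hab, hua, hvb⟩ := hD.2.1 u v huv
    obtain ⟨ju, hju, hu'⟩ := clamp_window hu hua
    obtain ⟨jv, hjv, hv'⟩ := clamp_window hv hvb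
    refine ⟨ju, jv, ?_, hu', hv'⟩
    rw [← windowIdx_le_windowIdx, hju, hjv]
    exact max_le_max le_rfl (min_le_min_right q hab)
  · exact hD.2.2 x _ _ _ (windowIdx_le_windowIdx.2 h) (windowIdx_le_windowIdx.2 h') hx hx''

end IsDPD

theorem stmt2 {V : Type} (G : Digraph' V) (r : ℕ) (bags : Fin r → Set V)
    (hD : IsDPD G r bags) (A B : Set V)
    (hAB : ∀ u ∈ A, ∀ v ∈ B, G.Adj u v ∧ G.Adj v u)
    (i : Fin r) (hi : A ⊆ bags i) :
    ∃ i₁ i₂ : Fin r, i₁ ≤ i₂ ∧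
      (∀ j : Fin r, i₁ ≤ j → j ≤ i₂ → A ⊆ bags j) ∧
      (B ⊆ ⋃ j ∈ {j : Fin r | i₁ ≤ j ∧ j ≤ i₂}, bags j) ∧
      IsDPD (G.induce (A ∪ B)) ((i₂ : ℕ) - (i₁ : ℕ) + 1)
        (fun j => {x : ↥(A ∪ B) | (x : V) ∈ bags
          ⟨(i₁ : ℕ) + (j : ℕ), by
            have h1 := j.isLt; have h2 := i₁.isLt; have h3 := i₂.isLt; omega⟩}) := by
  obtain ⟨i₁, hA₁, hmin⟩ := {j | A ⊆ bags j}.exists_min_image id (Set.toFinite _) ⟨i, hi⟩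
  obtain ⟨i₂, hA₂, hmax⟩ := {j | A ⊆ bags j}.exists_max_image id (Set.toFinite _) ⟨i, hi⟩
  have hB : ∀ b ∈ B, ∃ k, i₁ ≤ k ∧ k ≤ i₂ ∧ b ∈ bags k := fun b hb =>
    hD.exists_mem_between_of_forall_adj hA₁ hmin hA₂ hmax
      (fun a ha => (hAB a ha b hb).2) (fun a ha => (hAB a ha b hb).1)
  have hmeet : ∀ v ∈ A ∪ B, ∃ k, i₁ ≤ k ∧ k ≤ i₂ ∧ v ∈ bags k := by
    rintro v (hv | hv)
    · exact ⟨i₁, le_rfl, hmin i₂ hA₂, hA₁ hv⟩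
    · exact hB v hv
  refine ⟨i₁, i₂, hmin i₂ hA₂, fun j h₁ h₂ a ha => hD.2.2 a i₁ j i₂ h₁ h₂ (hA₁ ha) (hA₂ ha),
    fun b hb => ?_, hD.induce_window hmeet⟩
  obtain ⟨k, hk₁, hk₂, hk⟩ := hB b hb
  exact Set.mem_biUnion ⟨hk₁, hk₂⟩ hk
end
end

section
/- Let G and H be vertex-disjoint digraphs. Then the directed path-width of the order composition G ⊘ H equals the maximum of the directed path-widths of G and H. -/
noncomputable section
attribute [local instance] Classical.propDecidable

/-! Restricting a directed path-decomposition of `G ⊘ H` to either side gives one of `G` or of `H`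
of no larger width. Conversely, the bags of an optimal decomposition of `G` followed by those of
one of `H` decompose `G ⊘ H`: every arc between the two sides goes from `G` to `H`, hence from an
earlier bag to a later one. -/

lemma Fin.castAdd_lt_natAdd {m n : ℕ} (i : Fin m) (j : Fin n) :
    Fin.castAdd n i < Fin.natAdd m j :=
  Fin.lt_def.2 (Nat.lt_of_lt_of_le i.2 (Nat.le_add_right m j))

section Decompositions

variable {V W : Type}

lemma bagsWidth_le_iff {r : ℕ} {bags : Fin r → Set V} {w : ℕ} :
    bagsWidth bags ≤ w ↔ ∀ i, (bags i).ncard ≤ w + 1 := by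
  simp only [bagsWidth, tsub_le_iff_right, Finset.sup_le_iff, Finset.mem_univ, true_imp_iff]

lemma ncard_le_bagsWidth_add_one {r : ℕ} (bags : Fin r → Set V) (i : Fin r) :
    (bags i).ncard ≤ bagsWidth bags + 1 :=
  bagsWidth_le_iff.1 le_rfl i

lemma IsDPD.comap {G : Digraph' V} {G' : Digraph' W} {f : W → V}
    (hf : ∀ u v, G'.Adj u v → G.Adj (f u) (f v)) {r : ℕ} {bags : Fin r → Set V}
    (h : IsDPD G r bags) : IsDPD G' r (fun i => f ⁻¹' bags i) := by
  obtain ⟨hcover, harc, hconv⟩ := h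
  exact ⟨fun v => hcover (f v), fun u v huv => harc _ _ (hf u v huv),
    fun v => hconv (f v)⟩

lemma bagsWidth_comap_le [Finite V] {f : W → V} (hf : f.Injective) {r : ℕ}
    (bags : Fin r → Set V) : bagsWidth (fun i => f ⁻¹' bags i) ≤ bagsWidth bags :=
  bagsWidth_le_iff.2 fun i =>
    (Set.ncard_le_ncard_of_injOn f (fun _ h => h) hf.injOn).trans
      (ncard_le_bagsWidth_add_one bags i)

def orderBags {r s : ℕ} (bG : Fin r → Set V) (bH : Fin s → Set W) :
    Fin (r + s) → Set (V ⊕ W) :=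
  Fin.append (fun i => Sum.inl '' bG i) (fun j => Sum.inr '' bH j)

section orderBags

variable {r s : ℕ} {bG : Fin r → Set V} {bH : Fin s → Set W}

@[simp] lemma inl_mem_orderBags_castAdd {a : V} {i : Fin r} :
    Sum.inl a ∈ orderBags bG bH (Fin.castAdd s i) ↔ a ∈ bG i := by
  simp [orderBags]

@[simp] lemma inr_mem_orderBags_natAdd {b : W} {j : Fin s} :
    Sum.inr b ∈ orderBags bG bH (Fin.natAdd r j) ↔ b ∈ bH j := by
  simp [orderBags]

@[simp] lemma inl_notMem_orderBags_natAdd {a : V} {j : Fin s} :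
    Sum.inl a ∉ orderBags bG bH (Fin.natAdd r j) := by
  simp [orderBags]

@[simp] lemma inr_notMem_orderBags_castAdd {b : W} {i : Fin r} :
    Sum.inr b ∉ orderBags bG bH (Fin.castAdd s i) := by
  simp [orderBags]

lemma bagsWidth_orderBags_le (bG : Fin r → Set V) (bH : Fin s → Set W) :
    bagsWidth (orderBags bG bH) ≤ max (bagsWidth bG) (bagsWidth bH) := by
  refine bagsWidth_le_iff.2 (Fin.addCases (fun i => ?_) (fun j => ?_))
  · simp only [orderBags, Fin.append_left, Set.ncard_image_of_injective _ Sum.inl_injective]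
    exact (ncard_le_bagsWidth_add_one bG i).trans (by omega)
  · simp only [orderBags, Fin.append_right, Set.ncard_image_of_injective _ Sum.inr_injective]
    exact (ncard_le_bagsWidth_add_one bH j).trans (by omega)

lemma isDPD_orderBags {G : Digraph' V} {H : Digraph' W}
    (hG : IsDPD G r bG) (hH : IsDPD H s bH) : IsDPD (dOrder G H) (r + s) (orderBags bG bH) := by
  obtain ⟨hGcover, hGarc, hGconv⟩ := hG
  obtain ⟨hHcover, hHarc, hHconv⟩ := hH
  refine ⟨?_, ?_, ?_⟩
  · rintro (a | b)
    · obtain ⟨i, hi⟩ := hGcover a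
      exact ⟨Fin.castAdd s i, by simpa using hi⟩
    · obtain ⟨j, hj⟩ := hHcover b
      exact ⟨Fin.natAdd r j, by simpa using hj⟩
  · rintro (a | b) (a' | b') hadj
    · obtain ⟨i, i', hii', ha, ha'⟩ := hGarc a a' hadj
      exact ⟨Fin.castAdd s i, Fin.castAdd s i', Fin.le_def.2 hii', by simpa, by simpa⟩
    · obtain ⟨i, ha⟩ := hGcover a
      obtain ⟨j, hb⟩ := hHcover b'
      exact ⟨Fin.castAdd s i, Fin.natAdd r j, (Fin.castAdd_lt_natAdd i j).le,
        by simpa, by simpa⟩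
    · exact hadj.elim
    · obtain ⟨j, j', hjj', hb, hb'⟩ := hHarc b b' hadj
      exact ⟨Fin.natAdd r j, Fin.natAdd r j', (Fin.natAdd_le_natAdd_iff r).2 hjj',
        by simpa, by simpa⟩
  · rintro (a | b) i j k hij hjk hi hk
    · induction i using Fin.addCases with
      | right i => simp at hi
      | left i =>
      induction k using Fin.addCases with
      | right k => simp at hk
      | left k =>
      induction j using Fin.addCases with
      | right j => exact absurd hjk (Fin.castAdd_lt_natAdd k j).not_ge
      | left j =>
        simp only [inl_mem_orderBags_castAdd] at hi hk ⊢
        exact hGconv a i j k hij hjk hi hk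
    · induction i using Fin.addCases with
      | left i => simp at hi
      | right i =>
      induction k using Fin.addCases with
      | left k => simp at hk
      | right k =>
      induction j using Fin.addCases with
      | left j => exact absurd hij (Fin.castAdd_lt_natAdd j i).not_ge
      | right j =>
        simp only [inr_mem_orderBags_natAdd, Fin.natAdd_le_natAdd_iff] at hi hk hij hjk ⊢
        exact hHconv b i j k hij hjk hi hk

end orderBags

lemma dpw_le_bagsWidth [Fintype V] {G : Digraph' V} {r : ℕ} {bags : Fin r → Set V}
    (h : IsDPD G r bags) : dpw G ≤ bagsWidth bags :=
  Nat.sInf_le ⟨r, bags, h, rfl⟩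

lemma isDPD_univ (G : Digraph' V) : IsDPD G 1 fun _ => Set.univ :=
  ⟨fun _ => ⟨0, trivial⟩, fun _ _ _ => ⟨0, 0, le_rfl, trivial, trivial⟩,
    fun _ _ _ _ _ _ _ _ => trivial⟩

lemma exists_isDPD_bagsWidth_eq_dpw [Fintype V] (G : Digraph' V) :
    ∃ (r : ℕ) (bags : Fin r → Set V), IsDPD G r bags ∧ bagsWidth bags = dpw G :=
  Nat.sInf_mem
    (s := {w | ∃ (r : ℕ) (bags : Fin r → Set V), IsDPD G r bags ∧ bagsWidth bags = w})
    ⟨_, 1, _, isDPD_univ G, rfl⟩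

lemma dpw_le_of_injective [Fintype V] [Fintype W] {G : Digraph' V} {G' : Digraph' W}
    {f : W → V} (hf : f.Injective) (hadj : ∀ u v, G'.Adj u v → G.Adj (f u) (f v)) :
    dpw G' ≤ dpw G := by
  obtain ⟨r, bags, hD, hw⟩ := exists_isDPD_bagsWidth_eq_dpw G
  calc dpw G' ≤ bagsWidth (fun i => f ⁻¹' bags i) := dpw_le_bagsWidth (hD.comap hadj)
    _ ≤ dpw G := hw ▸ bagsWidth_comap_le hf bags

end Decompositions

theorem stmt4 {V W : Type} [Fintype V] [Fintype W] (G : Digraph' V) (H : Digraph' W) :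
    dpw (dOrder G H) = max (dpw G) (dpw H) := by
  refine le_antisymm ?_ (max_le ?_ ?_)
  · obtain ⟨r, bG, hG, hwG⟩ := exists_isDPD_bagsWidth_eq_dpw G
    obtain ⟨s, bH, hH, hwH⟩ := exists_isDPD_bagsWidth_eq_dpw H
    calc dpw (dOrder G H)
        ≤ bagsWidth (orderBags bG bH) := dpw_le_bagsWidth (isDPD_orderBags hG hH)
      _ ≤ max (dpw G) (dpw H) := hwG ▸ hwH ▸ bagsWidth_orderBags_le bG bH
  · exact dpw_le_of_injective Sum.inl_injective fun _ _ h => h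
  · exact dpw_le_of_injective Sum.inr_injective fun _ _ h => h
end
end
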